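/- Correctness of the per-type selection when types share due date and first-machine processing time: consider a two-machine JIT flow-shop instance, and call two jobs of the same type if they have both the same due date and the same processing time on M_1. Let ω = {𝒥_1,…,𝒥_{k'}} be a collection of types with pairwise distinct due dates d_1 < d_2 < … < d_{k'} (set d_0 = 0), where all jobs of type i have due date d_i and first-machine processing time p^(1)_i. For i ∈ {1,…,k'} define the nominee set N(i) = {J ∈ 𝒥_i : max(Σ_{l=1}^{i} p^(1)_l, d_{i−1}) + p^(2)_J ≤ d_i}. Then: (a) there exists a feasible set E containing exactly one job of each type of ω if and only if N(i) ≠ ∅ for every i ∈ {1,…,k'}; and (b) in that case, the maximum weight Σ_{J∈E} w_J over all such feasible sets E equals Σ_{i=1}^{k'} max{w_J : J ∈ N(i)}. -/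

import Mathlib

open Finset

/-- A just-in-time flow-shop instance on `m` machines with jobs of type `J`:
`p i j` is the (positive integer) processing time of job `j` on machine `i`,
`d j` its positive integer due date and `w j` its positive integer weight. -/
structure JITInstance (m : ℕ) (J : Type) where
  p : Fin m → J → ℕ
  d : J → ℕ
  w : J → ℕ
  p_pos : ∀ i j, 0 < p i j
  d_pos : ∀ j, 0 < d j
  w_pos : ∀ j, 0 < w j

/-- `S` is a JIT schedule of the job set `E`: on every machine the processing
intervals `(S i j, S i j + p i j]` of distinct jobs of `E` are pairwise disjoint,
each job's operation on machine `i+1` starts no earlier than its completion on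
machine `i`, and every job of `E` completes on the last machine exactly at its
due date.  (Start times are nonnegative automatically, being naturals.) -/
def IsJITSchedule {m : ℕ} {J : Type} (I : JITInstance m J)
    (E : Finset J) (S : Fin m → J → ℕ) : Prop :=
  (∀ i : Fin m, ∀ j ∈ E, ∀ j' ∈ E, j ≠ j' →
      S i j + I.p i j ≤ S i j' ∨ S i j' + I.p i j' ≤ S i j) ∧
  (∀ j ∈ E, ∀ i i' : Fin m, i'.val = i.val + 1 →
      S i j + I.p i j ≤ S i' j) ∧
  (∀ j ∈ E, ∀ i : Fin m, i.val = m - 1 →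
      S i j + I.p i j = I.d j)

/-- A job set is feasible if it admits a JIT schedule. -/
def Feasible {m : ℕ} {J : Type} (I : JITInstance m J) (E : Finset J) : Prop :=
  ∃ S : Fin m → J → ℕ, IsJITSchedule I E S

/-- The nominee set `N(i)` of type `i`: the jobs of type `i` (all of which have
due date `dd i` and first-machine processing time `pp i`) that can complete in
a JIT mode after the types `0,…,i-1`, i.e. those jobs `a` with
`max (∑_{l ≤ i} pp l) (dd (i-1)) + p² a ≤ dd i` (where `dd (-1) = 0`). -/
def nomineeSet12 {J : Type} [DecidableEq J] {k' : ℕ} (I : JITInstance 2 J)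
    (𝒥 : Fin k' → Finset J) (dd pp : Fin k' → ℕ) (i : Fin k') : Finset J :=
  (𝒥 i).filter (fun a =>
    max (∑ l ∈ Finset.Iic i, pp l)
        (if i.val = 0 then 0
         else dd ⟨i.val - 1, lt_of_le_of_lt (Nat.sub_le _ _) i.isLt⟩)
      + I.p 1 a ≤ dd i)

/-!
Once one job is taken from each type, the due dates fix the order of the jobs on `M₂`.
The job `a` of type `i` can then be completed just in time iff its `M₂` operation starts
after the `M₂` operations of the earlier types, which end by `d_{i-1}`, and after `M₁` has
processed the operations of types `1, …, i`, which takes at least `∑_{l ≤ i} p¹_l`.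
Conversely, running `M₁` back to back in type order and starting every `M₂` operation
just in time meets all these bounds. Feasibility thus splits into one independent
condition per type, `a ∈ N(i)`, and the weight is maximised type by type.
-/

theorem sum_le_of_disjoint_intervals {α : Type*} (T : Finset α) (s q : α → ℕ)
    (hq : ∀ a ∈ T, 0 < q a)
    (hdisj : ∀ a ∈ T, ∀ b ∈ T, a ≠ b → s a + q a ≤ s b ∨ s b + q b ≤ s a)
    {C : ℕ} (hC : ∀ a ∈ T, s a + q a ≤ C) : ∑ a ∈ T, q a ≤ C := by
  classical
  induction T using Finset.strongInduction generalizing C with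
  | _ T ih =>
    rcases T.eq_empty_or_nonempty with rfl | hT
    · simp
    obtain ⟨m, hm, hmax⟩ := T.exists_max_image s hT
    -- The latest-starting interval `m` leaves room `s m` for all the others.
    have hrest : ∀ a ∈ T.erase m, s a + q a ≤ s m := fun a ha => by
      have haT := mem_of_mem_erase ha
      have := hmax a haT
      have := hq m hm
      rcases hdisj a haT m hm (ne_of_mem_erase ha) with h | h <;> omega
    have := ih _ (erase_ssubset hm) (fun a ha => hq a (mem_of_mem_erase ha))
      (fun a ha b hb => hdisj a (mem_of_mem_erase ha) b (mem_of_mem_erase hb)) hrest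
    have := hC m hm
    rw [← add_sum_erase _ _ hm]
    omega

def predDue {k : ℕ} (d : Fin k → ℕ) (i : Fin k) : ℕ :=
  if i.val = 0 then 0 else d ⟨i.val - 1, lt_of_le_of_lt (Nat.sub_le _ _) i.isLt⟩

theorem predDue_le_iff {k : ℕ} {d : Fin k → ℕ} (hd : Monotone d) (i : Fin k) (x : ℕ) :
    predDue d i ≤ x ↔ ∀ l < i, d l ≤ x := by
  unfold predDue
  split_ifs with hi
  · simp only [zero_le, true_iff, Fin.lt_def]
    omega
  · refine ⟨fun h l hl => (hd (Fin.le_def.2 ?_)).trans h, fun h => h _ (Fin.lt_def.2 ?_)⟩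
    · rw [Fin.lt_def] at hl
      simp only
      omega
    · simp only
      omega

namespace JITInstance

def comap {m : ℕ} {J ι : Type} (I : JITInstance m J) (g : ι → J) :
    JITInstance m ι where
  p i a := I.p i (g a)
  d a := I.d (g a)
  w a := I.w (g a)
  p_pos i a := I.p_pos i (g a)
  d_pos a := I.d_pos (g a)
  w_pos a := I.w_pos (g a)

theorem feasible_image_iff {m : ℕ} {J ι : Type} [Fintype ι] [DecidableEq J]
    (I : JITInstance m J) {g : ι → J} (hg : Function.Injective g) :
    Feasible I (univ.image g) ↔ Feasible (I.comap g) univ := by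
  have key : ∀ S, IsJITSchedule I (univ.image g) S ↔
      IsJITSchedule (I.comap g) univ (fun i a => S i (g a)) := fun S => by
    simp only [IsJITSchedule, comap, forall_mem_image, mem_univ, true_implies, hg.ne_iff]
  constructor
  · rintro ⟨S, hS⟩
    exact ⟨_, (key S).1 hS⟩
  · rintro ⟨T, hT⟩
    refine ⟨fun i => Function.extend g (T i) 0, (key _).2 ?_⟩
    simpa only [hg.extend_apply] using hT

section TwoMachines

variable {k : ℕ} (I : JITInstance 2 (Fin k))

theorem due_le_start_of_lt (hI : StrictMono I.d) {S : Fin 2 → Fin k → ℕ}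
    (hS : IsJITSchedule I univ S) {l i : Fin k} (h : l < i) : I.d l ≤ S 1 i := by
  have hl := hS.2.2 l (mem_univ _) 1 rfl
  have hi := hS.2.2 i (mem_univ _) 1 rfl
  have := hI h
  rcases hS.1 1 l (mem_univ _) i (mem_univ _) h.ne with h | h <;> omega

theorem sum_Iic_le_start (hI : StrictMono I.d) {S : Fin 2 → Fin k → ℕ}
    (hS : IsJITSchedule I univ S) (i : Fin k) : ∑ l ∈ Iic i, I.p 0 l ≤ S 1 i := by
  refine sum_le_of_disjoint_intervals _ (S 0) (I.p 0) (fun l _ => I.p_pos 0 l)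
    (fun a _ b _ => hS.1 0 a (mem_univ _) b (mem_univ _)) fun l hl => ?_
  have hprec := hS.2.1 l (mem_univ _) 0 1 rfl
  rcases (mem_Iic.1 hl).lt_or_eq with h | rfl
  · have := hS.2.2 l (mem_univ _) 1 rfl
    have := due_le_start_of_lt I hI hS h
    omega
  · exact hprec

theorem feasible_univ_iff (hI : StrictMono I.d) :
    Feasible I univ ↔
      ∀ i, max (∑ l ∈ Iic i, I.p 0 l) (predDue I.d i) + I.p 1 i ≤ I.d i := by
  constructor
  · rintro ⟨S, hS⟩ i
    have hmax : max (∑ l ∈ Iic i, I.p 0 l) (predDue I.d i) ≤ S 1 i :=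
      max_le (sum_Iic_le_start I hI hS i)
        ((predDue_le_iff hI.monotone i _).2 fun l hl => due_le_start_of_lt I hI hS hl)
    have := hS.2.2 i (mem_univ _) 1 rfl
    omega
  · intro h
    have hsum i : ∑ l ∈ Iic i, I.p 0 l + I.p 1 i ≤ I.d i := by
      have := h i
      omega
    have hpred i l (hl : l < i) : I.d l + I.p 1 i ≤ I.d i := by
      have := h i
      have := (predDue_le_iff hI.monotone i (I.d i - I.p 1 i)).1 (by omega) l hl
      omega
    have hIic i : ∑ l ∈ Iic i, I.p 0 l = ∑ l ∈ Iio i, I.p 0 l + I.p 0 i := by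
      rw [Iic_eq_cons_Iio, sum_cons, add_comm]
    -- `M₁` runs the types back to back; `M₂` starts each job just in time.
    let S : Fin 2 → Fin k → ℕ := ![fun i => ∑ l ∈ Iio i, I.p 0 l, fun i => I.d i - I.p 1 i]
    have hmono : ∀ r, ∀ a b : Fin k, a < b → S r a + I.p r a ≤ S r b := by
      intro r a b hab
      fin_cases r
      · simp only [S, Fin.zero_eta, Matrix.cons_val_zero, ← hIic]
        exact sum_le_sum_of_subset fun l hl => mem_Iio.2 ((mem_Iic.1 hl).trans_lt hab)
      · have := hsum a
        have := hpred b a hab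
        simp only [S, Fin.mk_one, Matrix.cons_val_one, Matrix.cons_val_fin_one]
        omega
    refine ⟨S, fun r a _ b _ hab => (lt_or_gt_of_ne hab).imp (hmono r a b) (hmono r b a),
      fun i _ r r' hr => ?_, fun i _ r hr => ?_⟩
    · obtain rfl : r = 0 := Fin.ext (by omega)
      obtain rfl : r' = 1 := Fin.ext (by omega)
      have := hsum i
      have := hIic i
      simp only [S, Matrix.cons_val_zero, Matrix.cons_val_one, Matrix.cons_val_fin_one]
      omega
    · obtain rfl : r = 1 := Fin.ext (by omega)
      have := hsum i
      simp only [S, Matrix.cons_val_one, Matrix.cons_val_fin_one]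
      omega

end TwoMachines

end JITInstance

section Types

variable {J : Type} {k' : ℕ} (I : JITInstance 2 J) (𝒥 : Fin k' → Finset J) {dd : Fin k' → ℕ}

theorem injective_of_mem_types (hd : ∀ i, ∀ a ∈ 𝒥 i, I.d a = dd i) (hmono : StrictMono dd)
    {g : Fin k' → J} (hg : ∀ i, g i ∈ 𝒥 i) : Function.Injective g := fun i j h =>
  hmono.injective (by rw [← hd i _ (hg i), ← hd j _ (hg j), h])

theorem feasible_image_iff_mem_nomineeSet12 [DecidableEq J] {pp : Fin k' → ℕ}
    (hd : ∀ i, ∀ a ∈ 𝒥 i, I.d a = dd i) (hp : ∀ i, ∀ a ∈ 𝒥 i, I.p 0 a = pp i)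
    (hmono : StrictMono dd) {g : Fin k' → J} (hg : ∀ i, g i ∈ 𝒥 i) :
    Feasible I (univ.image g) ↔ ∀ i, g i ∈ nomineeSet12 I 𝒥 dd pp i := by
  have hdg : (I.comap g).d = dd := funext fun i => hd i _ (hg i)
  have hpg : (I.comap g).p 0 = pp := funext fun i => hp i _ (hg i)
  rw [I.feasible_image_iff (injective_of_mem_types I 𝒥 hd hmono hg),
    (I.comap g).feasible_univ_iff (hdg ▸ hmono), hdg, hpg]
  simp only [nomineeSet12, mem_filter, hg, true_and]
  rfl

end Types

theorem jit_two_machines_type_selection_dp1 {J : Type} [DecidableEq J]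
    {k' : ℕ} (I : JITInstance 2 J) (𝒥 : Fin k' → Finset J)
    (dd pp : Fin k' → ℕ)
    (hd : ∀ i, ∀ a ∈ 𝒥 i, I.d a = dd i)
    (hp : ∀ i, ∀ a ∈ 𝒥 i, I.p 0 a = pp i)
    (hmono : StrictMono dd) :
    ((∃ g : Fin k' → J, (∀ i, g i ∈ 𝒥 i) ∧
        Feasible I (Finset.univ.image g)) ↔
      ∀ i, (nomineeSet12 I 𝒥 dd pp i).Nonempty) ∧
    ((∀ i, (nomineeSet12 I 𝒥 dd pp i).Nonempty) →
      IsGreatest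
        {W : ℕ | ∃ g : Fin k' → J, (∀ i, g i ∈ 𝒥 i) ∧
          Feasible I (Finset.univ.image g) ∧
          W = ∑ a ∈ Finset.univ.image g, I.w a}
        (∑ i, (nomineeSet12 I 𝒥 dd pp i).sup I.w)) := by
  have hfeas {g : Fin k' → J} (hg : ∀ i, g i ∈ 𝒥 i) :=
    feasible_image_iff_mem_nomineeSet12 I 𝒥 hd hp hmono hg
  have hweight {g : Fin k' → J} (hg : ∀ i, g i ∈ 𝒥 i) :
      ∑ a ∈ univ.image g, I.w a = ∑ i, I.w (g i) :=
    sum_image fun i _ j _ h => injective_of_mem_types I 𝒥 hd hmono hg h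
  refine ⟨⟨fun ⟨g, hg, hE⟩ i => ⟨g i, (hfeas hg).1 hE i⟩, fun hN => ?_⟩, fun hN => ⟨?_, ?_⟩⟩
  · choose g hgN using hN
    have hg i : g i ∈ 𝒥 i := mem_of_mem_filter _ (hgN i)
    exact ⟨g, hg, (hfeas hg).2 hgN⟩
  · choose g hgN hgw using fun i => exists_mem_eq_sup _ (hN i) I.w
    have hg i : g i ∈ 𝒥 i := mem_of_mem_filter _ (hgN i)
    exact ⟨g, hg, (hfeas hg).2 hgN, by rw [hweight hg]; exact sum_congr rfl fun i _ => hgw i⟩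
  · rintro W ⟨g, hg, hE, rfl⟩
    rw [hweight hg]
    exact sum_le_sum fun i _ => le_sup ((hfeas hg).1 hE i)
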